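/- Let $\underline{u} < 0 < \overline{u}$ be constants, $b_3 > 0$, $\kappa > 0$, and let $r^*, \lambda^*, u^* : Q \to \mathbb{R}$ be measurable functions with $\underline{u} \le u^* \le \overline{u}$ a.e., $\lambda^*(x,t) = 1$ where $u^*(x,t) > 0$, $\lambda^*(x,t) = -1$ where $u^*(x,t) < 0$, $\lambda^*(x,t) \in [-1,1]$ where $u^*(x,t) = 0$, and suppose the projection formula $u^*(x,t) = \max\{\underline{u}, \min\{\overline{u}, -b_3^{-1}(r^*(x,t) + \kappa\lambda^*(x,t))\}\}$ holds a.e. in $Q$. Then for a.e. $(x,t) \in Q$: $u^*(x,t) = 0$ if and only if $|r^*(x,t)| \le \kappa$. -/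
import Mathlib


open MeasureTheory Set

/-- Full sparsity characterization: if `u*` satisfies the projection formula
`u* = max(u̲, min(u̅, -b₃⁻¹(r* + κλ*)))` a.e., with `λ* ∈ ∂‖·‖_{L¹}(u*)` and
constant bounds `u̲ < 0 < u̅`, then a.e. `u*(x,t) = 0 ⟺ |r*(x,t)| ≤ κ`. -/
theorem stmt13 {α : Type*} [MeasurableSpace α] (μ : Measure α)
    (ulo uhi b3 κ : ℝ) (hlo : ulo < 0) (hhi : 0 < uhi) (hb3 : 0 < b3) (hκ : 0 < κ)
    (rstar lstar ustar : α → ℝ)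
    (hbound : ∀ᵐ z ∂μ, ulo ≤ ustar z ∧ ustar z ≤ uhi)
    (hl : ∀ᵐ z ∂μ, (0 < ustar z → lstar z = 1) ∧ (ustar z < 0 → lstar z = -1) ∧
      (ustar z = 0 → lstar z ∈ Set.Icc (-1:ℝ) 1))
    (hproj : ∀ᵐ z ∂μ,
      ustar z = max ulo (min uhi (-b3⁻¹ * (rstar z + κ * lstar z)))) :
    ∀ᵐ z ∂μ, (ustar z = 0 ↔ |rstar z| ≤ κ) := by
  filter_upwards [hbound, hl, hproj] with z hb hL hP
  obtain ⟨h1, h2, h3⟩ := hL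
  have hb3' : (0:ℝ) < b3⁻¹ := inv_pos.mpr hb3
  constructor
  · intro h0
    obtain ⟨hl1, hl2⟩ := h3 h0
    rw [h0] at hP
    have hmin : min uhi (-b3⁻¹ * (rstar z + κ * lstar z)) = 0 := by
      rcases max_cases ulo (min uhi (-b3⁻¹ * (rstar z + κ * lstar z))) with
        ⟨he, _⟩ | ⟨he, _⟩ <;> linarith
    have ht : -b3⁻¹ * (rstar z + κ * lstar z) = 0 := by
      rcases min_cases uhi (-b3⁻¹ * (rstar z + κ * lstar z)) with
        ⟨he, _⟩ | ⟨he, _⟩ <;> linarith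
    have hr : rstar z = -(κ * lstar z) := by
      have hsum : rstar z + κ * lstar z = 0 := by
        by_contra hne
        exact mul_ne_zero (neg_ne_zero.mpr (ne_of_gt hb3')) hne ht
      linarith
    rw [hr, abs_neg, abs_mul, abs_of_pos hκ]
    have : |lstar z| ≤ 1 := abs_le.mpr ⟨hl1, hl2⟩
    nlinarith
  · intro hr
    rw [abs_le] at hr
    obtain ⟨hr1, hr2⟩ := hr
    rcases lt_trichotomy (ustar z) 0 with hu | hu | hu
    · exfalso
      rw [h2 hu] at hP
      have hge : (0:ℝ) ≤ -b3⁻¹ * (rstar z + κ * (-1)) := by nlinarith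
      have hmin : (0:ℝ) ≤ min uhi (-b3⁻¹ * (rstar z + κ * (-1))) :=
        le_min (le_of_lt hhi) hge
      have : (0:ℝ) ≤ ustar z := hP ▸ le_trans hmin (le_max_right _ _)
      linarith
    · exact hu
    · exfalso
      rw [h1 hu] at hP
      have hle : -b3⁻¹ * (rstar z + κ * 1) ≤ 0 := by nlinarith
      have : ustar z ≤ 0 := by
        rw [hP]
        exact max_le (le_of_lt hlo) (le_trans (min_le_right _ _) hle)
      linarith
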